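/- Let A be a finite type of atomic propositions and let letters be subsets σ ⊆ A. Consider (i) LTL formulas in positive normal form over A, generated by: true, false, literals p and ¬p for p ∈ A, conjunction, disjunction, next, until, and release, with the standard semantics over letter-valued words u : ℕ → Set A (where p holds at n iff p ∈ u(n) and ¬p holds at n iff p ∉ u(n)), and (ii) negation-free LTL formulas over the atom type Σ := Set A, with satisfaction over set-valued words w : ℕ → Set Σ (where an atom σ holds at n iff σ ∈ w(n)), both with the recursive semantics for ∧, ∨, ◯, U, R. Define the translation tr from (i) to (ii) by replacing each literal p with the finite disjunction of all atoms σ with p ∈ σ, replacing each literal ¬p with the finite disjunction of all atoms σ with p ∉ σ, and commuting with all other connectives. Then for every word u : ℕ → Set A, every formula ψ in positive normal form over A, and every position n: u satisfies ψ at n if and only if the singleton word n ↦ {u(n)} satisfies tr(ψ) at n. -/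
import Mathlib


/-- LTL formulas in positive normal form over atomic propositions `A`:
negations occur only on atoms (literals `pos p` and `neg p`). -/
inductive PNFFormula (A : Type*) where
  | tt : PNFFormula A
  | ff : PNFFormula A
  | pos : A → PNFFormula A
  | neg : A → PNFFormula A
  | and : PNFFormula A → PNFFormula A → PNFFormula A
  | or : PNFFormula A → PNFFormula A → PNFFormula A
  | next : PNFFormula A → PNFFormula A
  | until_ : PNFFormula A → PNFFormula A → PNFFormula A
  | release : PNFFormula A → PNFFormula A → PNFFormula A

/-- Satisfaction of a PNF formula by a letter-valued word `u : ℕ → Set A`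
at position `n`: `p` holds at `n` iff `p ∈ u n`, `¬p` holds iff `p ∉ u n`. -/
def PNFSat {A : Type*} (u : ℕ → Set A) : ℕ → PNFFormula A → Prop
  | _, .tt => True
  | _, .ff => False
  | n, .pos p => p ∈ u n
  | n, .neg p => p ∉ u n
  | n, .and ψ₁ ψ₂ => PNFSat u n ψ₁ ∧ PNFSat u n ψ₂
  | n, .or ψ₁ ψ₂ => PNFSat u n ψ₁ ∨ PNFSat u n ψ₂
  | n, .next ψ => PNFSat u (n + 1) ψ
  | n, .until_ ψ₁ ψ₂ =>
      ∃ i : ℕ, PNFSat u (n + i) ψ₂ ∧ ∀ j : ℕ, j < i → PNFSat u (n + j) ψ₁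
  | n, .release ψ₁ ψ₂ =>
      (∀ i : ℕ, PNFSat u (n + i) ψ₂) ∨
        ∃ j : ℕ, PNFSat u (n + j) ψ₁ ∧ ∀ i : ℕ, i ≤ j → PNFSat u (n + i) ψ₂

/-- Negation-free LTL formulas over atomic propositions `A`. -/
inductive NFFormula (A : Type*) where
  | tt : NFFormula A
  | ff : NFFormula A
  | atom : A → NFFormula A
  | and : NFFormula A → NFFormula A → NFFormula A
  | or : NFFormula A → NFFormula A → NFFormula A
  | next : NFFormula A → NFFormula A
  | until_ : NFFormula A → NFFormula A → NFFormula A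
  | release : NFFormula A → NFFormula A → NFFormula A

/-- Satisfaction of a negation-free LTL formula by a set-valued word
`w : ℕ → Set A` at position `n`. -/
def NFSat {A : Type*} (w : ℕ → Set A) : ℕ → NFFormula A → Prop
  | _, .tt => True
  | _, .ff => False
  | n, .atom a => a ∈ w n
  | n, .and ψ₁ ψ₂ => NFSat w n ψ₁ ∧ NFSat w n ψ₂
  | n, .or ψ₁ ψ₂ => NFSat w n ψ₁ ∨ NFSat w n ψ₂
  | n, .next ψ => NFSat w (n + 1) ψ
  | n, .until_ ψ₁ ψ₂ =>
      ∃ i : ℕ, NFSat w (n + i) ψ₂ ∧ ∀ j : ℕ, j < i → NFSat w (n + j) ψ₁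
  | n, .release ψ₁ ψ₂ =>
      (∀ i : ℕ, NFSat w (n + i) ψ₂) ∨
        ∃ j : ℕ, NFSat w (n + j) ψ₁ ∧ ∀ i : ℕ, i ≤ j → NFSat w (n + i) ψ₂

/-- Finite disjunction of atoms, over a list. -/
def bigOr {B : Type*} : List B → NFFormula B
  | [] => .ff
  | a :: l => .or (.atom a) (bigOr l)

open Classical in
/-- Translation of a PNF formula over `A` to a negation-free formula over the
alphabet `Σ = Set A`: each literal `p` is replaced by the finite disjunction of
all letters `σ` with `p ∈ σ`, each literal `¬p` by the finite disjunction of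
all letters `σ` with `p ∉ σ`, commuting with all other connectives. -/
noncomputable def tr {A : Type*} [Fintype A] :
    PNFFormula A → NFFormula (Set A)
  | .tt => .tt
  | .ff => .ff
  | .pos p => bigOr ((Finset.univ.filter (fun σ : Set A => p ∈ σ)).toList)
  | .neg p => bigOr ((Finset.univ.filter (fun σ : Set A => p ∉ σ)).toList)
  | .and ψ₁ ψ₂ => .and (tr ψ₁) (tr ψ₂)
  | .or ψ₁ ψ₂ => .or (tr ψ₁) (tr ψ₂)
  | .next ψ => .next (tr ψ)
  | .until_ ψ₁ ψ₂ => .until_ (tr ψ₁) (tr ψ₂)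
  | .release ψ₁ ψ₂ => .release (tr ψ₁) (tr ψ₂)

lemma bigOr_sat {B : Type*} (w : ℕ → Set B) (n : ℕ) :
    ∀ l : List B, NFSat w n (bigOr l) ↔ ∃ a ∈ l, a ∈ w n
  | [] => by simp [bigOr, NFSat]
  | a :: l => by
    simp [bigOr, NFSat, bigOr_sat w n l]

/-- a letter-valued word `u` satisfies a PNF formula `ψ` at `n`
iff the singleton set-valued word `m ↦ {u m}` satisfies `tr ψ` at `n`. -/
theorem stmt7 {A : Type*} [Fintype A] (u : ℕ → Set A) (ψ : PNFFormula A)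
    (n : ℕ) :
    PNFSat u n ψ ↔ NFSat (fun m : ℕ => ({u m} : Set (Set A))) n (tr ψ) := by
  induction ψ generalizing n with
  | tt => simp [PNFSat, NFSat, tr]
  | ff => simp [PNFSat, NFSat, tr]
  | pos p => simp [PNFSat, tr, bigOr_sat]
  | neg p => simp [PNFSat, tr, bigOr_sat]
  | and ψ₁ ψ₂ ih₁ ih₂ => simp [PNFSat, NFSat, tr, ih₁, ih₂]
  | or ψ₁ ψ₂ ih₁ ih₂ => simp [PNFSat, NFSat, tr, ih₁, ih₂]
  | next ψ ih => simp [PNFSat, NFSat, tr, ih]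
  | until_ ψ₁ ψ₂ ih₁ ih₂ => simp [PNFSat, NFSat, tr, ih₁, ih₂]
  | release ψ₁ ψ₂ ih₁ ih₂ => simp [PNFSat, NFSat, tr, ih₁, ih₂]
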